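/- arXiv:1711.05192 — 2 statements merged into one kernel-verified Lean document; each statement's English description precedes it below -/
import Mathlib

section
/- Let 𝓑 be a finite family of pairwise disjoint balls in ℝ², let 𝓒 be the subfamily of balls contained in Ω, and let α, β be finite Radon measures on Ω such that supp α ⊂ ⋃_{B∈𝓒} B, supp β ⊂ ⋃_{B∈𝓑} B, and α(B) = β(B) for every B ∈ 𝓒. Then ‖α − β‖_flat ≤ C · Rad(𝓑) · (|α| + |β|)(Ω), where Rad(𝓑) is the sum of the radii of the balls in 𝓑 and C is a universal constant (C = 2 works). -/
/-!
Split `∫ ψ d(α - β)` into the contributions of the balls. On a ball `B(c, r) ⊆ Ω` the two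
masses agree, so `ψ` may be replaced by `ψ - ψ c`, which is bounded by `r` there. A ball not
contained in `Ω` contains a zero of `ψ`, so `|ψ| ≤ 2r` on it, and `ψ = 0` off `Ω`. Either way
the ball contributes at most `2r (|α| + |β|)(Ω)`.
-/

open MeasureTheory Metric Set

section

variable {X : Type*} [PseudoMetricSpace X] {ψ : X → ℝ}

lemma LipschitzWith.abs_le_two_mul_of_mem_ball (hψ : LipschitzWith 1 ψ) {c x₀ x : X} {r : ℝ}
    (hx₀ : x₀ ∈ ball c r) (hψx₀ : ψ x₀ = 0) (hx : x ∈ ball c r) : |ψ x| ≤ 2 * r := by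
  have hdist : dist x x₀ < 2 * r := by
    linarith [dist_triangle_right x x₀ c, mem_ball.1 hx, mem_ball.1 hx₀]
  simpa [Real.dist_eq, hψx₀] using (hψ.dist_le_mul x x₀).trans (by simpa using hdist.le)

variable [MeasurableSpace X] {μ ν : Measure X}

lemma LipschitzWith.abs_setIntegral_ball_sub_center_le [IsFiniteMeasure μ]
    (hψ : LipschitzWith 1 ψ) (c : X) (r : ℝ) :
    |∫ x in ball c r, (ψ x - ψ c) ∂μ| ≤ r * μ.real (ball c r) := by
  have hosc : ∀ x ∈ ball c r, ‖ψ x - ψ c‖ ≤ r := fun x hx => by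
    simpa [← Real.dist_eq] using (hψ.dist_le_mul x c).trans (by simpa using (mem_ball.1 hx).le)
  simpa using norm_setIntegral_le_of_norm_le_const (measure_lt_top μ _) hosc

lemma abs_setIntegral_le_mul_measureReal_inter_tsupport [IsFiniteMeasure μ] {s : Set X}
    (hs : MeasurableSet s) {C : ℝ} (hψC : ∀ x ∈ s, |ψ x| ≤ C) :
    |∫ x in s, ψ x ∂μ| ≤ C * μ.real (s ∩ tsupport ψ) := by
  rw [setIntegral_eq_of_subset_of_forall_sdiff_eq_zero (s := s ∩ tsupport ψ) hs inter_subset_left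
    fun x (hx : x ∈ s \ (s ∩ tsupport ψ)) =>
      image_eq_zero_of_notMem_tsupport fun h => hx.2 ⟨hx.1, h⟩]
  exact norm_setIntegral_le_of_norm_le_const (f := ψ) (measure_lt_top μ _) fun x hx =>
    hψC x hx.1

variable [IsFiniteMeasure μ] [IsFiniteMeasure ν]

lemma LipschitzWith.abs_setIntegral_ball_sub_setIntegral_le_of_measureReal_eq
    (hψ : LipschitzWith 1 ψ) (hψμ : Integrable ψ μ) (hψν : Integrable ψ ν) {c : X} {r : ℝ}
    (hμν : μ.real (ball c r) = ν.real (ball c r)) :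
    |∫ x in ball c r, ψ x ∂μ - ∫ x in ball c r, ψ x ∂ν| ≤
      r * (μ.real (ball c r) + ν.real (ball c r)) := by
  have hcenter : ∀ (ρ : Measure X) [IsFiniteMeasure ρ], Integrable ψ ρ →
      ∫ x in ball c r, ψ x ∂ρ = ∫ x in ball c r, (ψ x - ψ c) ∂ρ + ρ.real (ball c r) * ψ c :=
    fun ρ _ hψρ => by
      rw [integral_sub hψρ.integrableOn (integrable_const _), setIntegral_const, smul_eq_mul]
      ring
  rw [hcenter μ hψμ, hcenter ν hψν]
  conv_lhs => rw [hμν, add_sub_add_right_eq_sub]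
  linarith [abs_sub (∫ x in ball c r, (ψ x - ψ c) ∂μ) (∫ x in ball c r, (ψ x - ψ c) ∂ν),
    hψ.abs_setIntegral_ball_sub_center_le (μ := μ) c r,
    hψ.abs_setIntegral_ball_sub_center_le (μ := ν) c r]

lemma LipschitzWith.abs_setIntegral_ball_sub_setIntegral_le [OpensMeasurableSpace X] {Ω : Set X}
    (hψ : LipschitzWith 1 ψ) (hψΩ : tsupport ψ ⊆ Ω) (hψμ : Integrable ψ μ) (hψν : Integrable ψ ν)
    {c : X} {r : ℝ} (hr : 0 ≤ r) (hμν : ball c r ⊆ Ω → μ.real (ball c r) = ν.real (ball c r)) :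
    |∫ x in ball c r, ψ x ∂μ - ∫ x in ball c r, ψ x ∂ν| ≤ 2 * r * (μ.real Ω + ν.real Ω) := by
  by_cases hΩ : ball c r ⊆ Ω
  · calc _ ≤ r * (μ.real (ball c r) + ν.real (ball c r)) :=
          hψ.abs_setIntegral_ball_sub_setIntegral_le_of_measureReal_eq hψμ hψν (hμν hΩ)
      _ ≤ r * (μ.real Ω + ν.real Ω) :=
          mul_le_mul_of_nonneg_left (add_le_add (measureReal_mono hΩ) (measureReal_mono hΩ)) hr
      _ ≤ 2 * r * (μ.real Ω + ν.real Ω) := by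
          nlinarith [measureReal_nonneg (μ := μ) (s := Ω), measureReal_nonneg (μ := ν) (s := Ω)]
  · obtain ⟨x₀, hx₀, hx₀Ω⟩ := not_subset.1 hΩ
    have hψx₀ : ψ x₀ = 0 := image_eq_zero_of_notMem_tsupport fun h => hx₀Ω (hψΩ h)
    have hbound : ∀ (ρ : Measure X) [IsFiniteMeasure ρ],
        |∫ x in ball c r, ψ x ∂ρ| ≤ 2 * r * ρ.real Ω := fun ρ _ =>
      (abs_setIntegral_le_mul_measureReal_inter_tsupport measurableSet_ball
        fun x hx => hψ.abs_le_two_mul_of_mem_ball hx₀ hψx₀ hx).trans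
          (mul_le_mul_of_nonneg_left (measureReal_mono (inter_subset_right.trans hψΩ))
            (by linarith [pos_of_mem_ball hx₀]))
    linarith [abs_sub (∫ x in ball c r, ψ x ∂μ) (∫ x in ball c r, ψ x ∂ν), hbound μ, hbound ν]

theorem LipschitzWith.abs_integral_sub_integral_le_of_balls [OpensMeasurableSpace X]
    (hψ : LipschitzWith 1 ψ) {Ω : Set X} (hψΩ : tsupport ψ ⊆ Ω) (hψμ : Integrable ψ μ)
    (hψν : Integrable ψ ν) {ι : Type*} [Fintype ι] {c : ι → X} {r : ι → ℝ} (hr : ∀ i, 0 ≤ r i)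
    (hdisj : Pairwise fun i j => Disjoint (ball (c i) (r i)) (ball (c j) (r j)))
    (hμ : μ (⋃ i, ball (c i) (r i))ᶜ = 0) (hν : ν (⋃ i, ball (c i) (r i))ᶜ = 0)
    (hμν : ∀ i, ball (c i) (r i) ⊆ Ω → μ.real (ball (c i) (r i)) = ν.real (ball (c i) (r i))) :
    |∫ x, ψ x ∂μ - ∫ x, ψ x ∂ν| ≤ 2 * (∑ i, r i) * (μ.real Ω + ν.real Ω) := by
  have hsum : ∀ ρ : Measure X, ρ (⋃ i, ball (c i) (r i))ᶜ = 0 → Integrable ψ ρ →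
      ∫ x, ψ x ∂ρ = ∑ i, ∫ x in ball (c i) (r i), ψ x ∂ρ := fun ρ hρ hψρ => by
    rw [integral_eq_setIntegral (s := ⋃ i, ball (c i) (r i)) (mem_ae_iff.2 hρ),
      integral_iUnion_fintype (fun _ => measurableSet_ball) hdisj fun _ => hψρ.integrableOn]
  rw [hsum μ hμ hψμ, hsum ν hν hψν, ← Finset.sum_sub_distrib, Finset.mul_sum, Finset.sum_mul]
  exact (Finset.abs_sum_le_sum_abs _ _).trans <| Finset.sum_le_sum fun i _ =>
    hψ.abs_setIntegral_ball_sub_setIntegral_le hψΩ hψμ hψν (hr i) (hμν i)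

end

theorem flat_estimate_measures_on_balls_general
    (Ω : Set ℂ)
    {ι : Type} [Fintype ι] (c : ι → ℂ) (r : ι → ℝ) (hr : ∀ i, 0 < r i)
    (hdisj : Pairwise fun i j => Disjoint (Metric.ball (c i) (r i)) (Metric.ball (c j) (r j)))
    (𝓒 : Set ι) (h𝓒 : ∀ i, i ∈ 𝓒 ↔ Metric.ball (c i) (r i) ⊆ Ω)
    (αp αn βp βn : Measure ℂ)
    [IsFiniteMeasure αp] [IsFiniteMeasure αn] [IsFiniteMeasure βp] [IsFiniteMeasure βn]
    (hαsupp : αp (⋃ i ∈ 𝓒, Metric.ball (c i) (r i))ᶜ = 0 ∧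
              αn (⋃ i ∈ 𝓒, Metric.ball (c i) (r i))ᶜ = 0)
    (hβsupp : βp (⋃ i, Metric.ball (c i) (r i))ᶜ = 0 ∧
              βn (⋃ i, Metric.ball (c i) (r i))ᶜ = 0)
    (heq : ∀ i ∈ 𝓒, (αp (Metric.ball (c i) (r i))).toReal - (αn (Metric.ball (c i) (r i))).toReal
        = (βp (Metric.ball (c i) (r i))).toReal - (βn (Metric.ball (c i) (r i))).toReal)
    (ψ : ℂ → ℝ) (hψlip : LipschitzWith 1 ψ) (hψb : ∀ x, |ψ x| ≤ 1)
    (hψsupp : tsupport ψ ⊆ Ω) :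
    |(∫ x, ψ x ∂αp - ∫ x, ψ x ∂αn) - (∫ x, ψ x ∂βp - ∫ x, ψ x ∂βn)| ≤
      2 * (∑ i, r i) * ((αp Ω).toReal + (αn Ω).toReal + (βp Ω).toReal + (βn Ω).toReal) := by
  have hint : ∀ (ρ : Measure ℂ) [IsFiniteMeasure ρ], Integrable ψ ρ := fun ρ _ =>
    .of_bound hψlip.continuous.aestronglyMeasurable 1 (ae_of_all _ hψb)
  have hαβ : (⋃ i, ball (c i) (r i))ᶜ ⊆ (⋃ i ∈ 𝓒, ball (c i) (r i))ᶜ :=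
    compl_subset_compl.2 <| iUnion₂_subset fun i _ => subset_iUnion (fun i => ball (c i) (r i)) i
  -- `α - β = (αp + βn) - (αn + βp)` is a difference of two positive measures.
  have hbound := hψlip.abs_integral_sub_integral_le_of_balls (μ := αp + βn) (ν := αn + βp)
    hψsupp (hint _) (hint _) (fun i => (hr i).le) hdisj
    (by rw [Measure.add_apply, measure_mono_null hαβ hαsupp.1, hβsupp.2, add_zero])
    (by rw [Measure.add_apply, measure_mono_null hαβ hαsupp.2, hβsupp.1, add_zero])
    (fun i hi => by
      rw [measureReal_add_apply, measureReal_add_apply]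
      simp only [measureReal_def]
      linarith [heq i ((h𝓒 i).2 hi)])
  rw [integral_add_measure (hint _) (hint _), integral_add_measure (hint _) (hint _),
    measureReal_add_apply, measureReal_add_apply] at hbound
  simp only [measureReal_def] at hbound
  convert hbound using 2 <;> ring

/-- Lemma on flat-norm estimates for measures concentrated on small
balls: `𝓑 = {B(cᵢ, rᵢ)}` is a finite family of pairwise disjoint balls, `𝓒` the
subfamily of balls contained in `Ω`; `α = αp − αn` and `β = βp − βn` (Jordan
decompositions) are finite Radon measures with `supp α ⊆ ⋃_{B∈𝓒} B`,
`supp β ⊆ ⋃_{B∈𝓑} B` and `α(B) = β(B)` for `B ∈ 𝓒`.  Then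
`‖α − β‖_flat ≤ 2 · Rad(𝓑) · (|α| + |β|)(Ω)`, tested on any `ψ ∈ C_c^{0,1}(Ω)`
with `sup|ψ| ≤ 1` and `Lip(ψ) ≤ 1`. -/
theorem flat_estimate_measures_on_balls
    (Ω : Set ℂ) (hΩ : IsOpen Ω) (hb : Bornology.IsBounded Ω)
    {ι : Type} [Fintype ι] (c : ι → ℂ) (r : ι → ℝ) (hr : ∀ i, 0 < r i)
    (hdisj : Pairwise fun i j => Disjoint (Metric.ball (c i) (r i)) (Metric.ball (c j) (r j)))
    (𝓒 : Set ι) (h𝓒 : ∀ i, i ∈ 𝓒 ↔ Metric.ball (c i) (r i) ⊆ Ω)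
    (αp αn βp βn : Measure ℂ)
    [IsFiniteMeasure αp] [IsFiniteMeasure αn] [IsFiniteMeasure βp] [IsFiniteMeasure βn]
    (hα : αp.MutuallySingular αn) (hβ : βp.MutuallySingular βn)
    (hαsupp : αp (⋃ i ∈ 𝓒, Metric.ball (c i) (r i))ᶜ = 0 ∧
              αn (⋃ i ∈ 𝓒, Metric.ball (c i) (r i))ᶜ = 0)
    (hβsupp : βp (⋃ i, Metric.ball (c i) (r i))ᶜ = 0 ∧
              βn (⋃ i, Metric.ball (c i) (r i))ᶜ = 0)
    (heq : ∀ i ∈ 𝓒, (αp (Metric.ball (c i) (r i))).toReal - (αn (Metric.ball (c i) (r i))).toReal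
        = (βp (Metric.ball (c i) (r i))).toReal - (βn (Metric.ball (c i) (r i))).toReal)
    (ψ : ℂ → ℝ) (hψlip : LipschitzWith 1 ψ) (hψb : ∀ x, |ψ x| ≤ 1)
    (hψsupp : tsupport ψ ⊆ Ω) :
    |(∫ x, ψ x ∂αp - ∫ x, ψ x ∂αn) - (∫ x, ψ x ∂βp - ∫ x, ψ x ∂βn)| ≤
      2 * (∑ i, r i) * ((αp Ω).toReal + (αn Ω).toReal + (βp Ω).toReal + (βn Ω).toReal) :=
  flat_estimate_measures_on_balls_general Ω c r hr hdisj 𝓒 h𝓒 αp αn βp βn hαsupp hβsupp heq ψ hψlip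
    hψb hψsupp
end

section
/- If u ∈ H¹(A; ℝ² \ B_α) for some α > 0, where A ⊂ ℝ² is open bounded with Lipschitz boundary and simply connected, then deg(u, ∂A) = 0. -/
/-!
Along the loop `w = u ∘ γ` the integrand equals `Im (w' / w)`, so the integral is the increment
of the imaginary part of a `C¹` logarithm `ψ` of `w`, obtained by integrating `w' / w`. Since `u`
does not vanish on the simply connected set `closure A`, the loop `w` is null-homotopic in
`ℂ \ {0}`, and because `exp : ℂ → ℂ \ {0}` is a covering map, homotopy lifting forces
`ψ 1 = ψ 0`.
-/

open Real ComplexConjugate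

open unitInterval in
theorem Path.exp_lift_apply_one_eq_apply_zero {X : Type*} [TopologicalSpace X]
    [SimplyConnectedSpace X] {x : X} (γ : Path x x) (f : C(X, {z : ℂ // z ≠ 0})) (L : C(I, ℂ))
    (hL : ∀ t, Complex.exp (L t) = f (γ t)) : L 1 = L 0 := by
  have cov := Complex.isCoveringMap_exp
  have hL0 : f x = ⟨Complex.exp (L 0), Complex.exp_ne_zero _⟩ := by
    ext; simpa using (hL 0).symm
  have hnull : (f.comp γ.toContinuousMap).HomotopicRel (.const I (f x)) {0, 1} :=
    ContinuousMap.HomotopicRel.comp_continuousMap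
      (SimplyConnectedSpace.paths_homotopic γ (Path.refl x)) f
  have hlift : L = cov.liftPath (f.comp γ.toContinuousMap) (L 0) (by simpa using hL0) :=
    (cov.eq_liftPath_iff' _).2 ⟨funext fun t => Subtype.ext (hL t), rfl⟩
  have hend := cov.liftPath_apply_one_eq_of_homotopicRel hnull (L 0) (by simpa using hL0) hL0
  rwa [cov.liftPath_const hL0, ← hlift] at hend

theorem exp_lift_apply_one_eq_apply_zero_of_simplyConnectedSpace {X : Type*} [TopologicalSpace X]
    {s : Set X} [SimplyConnectedSpace s] {f : X → ℂ} (hf : ContinuousOn f s)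
    (hf0 : ∀ x ∈ s, f x ≠ 0) {γ : ℝ → X} (hγ : Continuous γ) (hγs : ∀ t, γ t ∈ s)
    (hγ1 : γ 1 = γ 0) {ψ : ℝ → ℂ} (hψ : Continuous ψ)
    (hexp : ∀ t, Complex.exp (ψ t) = f (γ t)) : ψ 1 = ψ 0 := by
  let x₀ : s := ⟨γ 0, hγs 0⟩
  let loop : Path x₀ x₀ :=
    { toFun t := ⟨γ t, hγs t⟩
      continuous_toFun := by fun_prop
      source' := rfl
      target' := Subtype.ext hγ1 }
  let f' : C(s, {z : ℂ // z ≠ 0}) :=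
    ⟨fun x => ⟨f x, hf0 x x.2⟩, hf.domRestrict.subtype_mk _⟩
  exact loop.exp_lift_apply_one_eq_apply_zero f' ⟨fun t => ψ t, by fun_prop⟩ fun t => hexp t

theorem exists_hasDerivAt_exp_eq_of_contDiff {w : ℝ → ℂ} (hw : ContDiff ℝ 1 w)
    (hw0 : ∀ t, w t ≠ 0) :
    ∃ ψ : ℝ → ℂ, (∀ t, HasDerivAt ψ (deriv w t / w t) t) ∧ ∀ t, Complex.exp (ψ t) = w t := by
  have hw' : ∀ t, HasDerivAt w (deriv w t) t :=
    fun t => (hw.differentiable one_ne_zero t).hasDerivAt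
  have hlogDeriv : Continuous fun t => deriv w t / w t :=
    (hw.continuous_deriv le_rfl).div hw.continuous hw0
  set ψ : ℝ → ℂ := fun t => Complex.log (w 0) + ∫ s in (0:ℝ)..t, deriv w s / w s
  have hψ : ∀ t, HasDerivAt ψ (deriv w t / w t) t := fun t =>
    (hlogDeriv.integral_hasStrictDerivAt 0 t).hasDerivAt.const_add _
  refine ⟨ψ, hψ, fun t => ?_⟩
  have hconst : ∀ s, HasDerivAt (fun s => w s * Complex.exp (-ψ s)) 0 s := fun s =>
    ((hw' s).mul (hψ s).neg.cexp).congr_deriv (by field_simp [hw0 s]; ring)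
  have h0 : w 0 * Complex.exp (-ψ 0) = 1 := by
    simp [ψ, Complex.exp_neg, Complex.exp_log (hw0 0), hw0 0]
  have ht := (is_const_of_deriv_eq_zero (fun s => (hconst s).differentiableAt)
    (fun s => (hconst s).deriv) t 0).trans h0
  rw [Complex.exp_neg, mul_inv_eq_one₀ (Complex.exp_ne_zero _)] at ht
  exact ht.symm

theorem im_conj_div_norm_mul_deriv {w : ℝ → ℂ} {t : ℝ} (hw : DifferentiableAt ℝ w t)
    (hw0 : w t ≠ 0) :
    (conj (w t / (‖w t‖ : ℂ)) * deriv (fun s => w s / (‖w s‖ : ℂ)) t).im =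
      (deriv w t / w t).im := by
  set n' : ℝ := deriv (fun s => ‖w s‖) t
  have hnorm : HasDerivAt (fun s => (‖w s‖ : ℂ)) (n' : ℂ) t :=
    (hw.norm ℝ hw0).hasDerivAt.ofReal_comp
  have hnorm0 : (‖w t‖ : ℂ) ≠ 0 := by simpa using hw0
  have hunit : HasDerivAt (fun s => w s / (‖w s‖ : ℂ))
      ((deriv w t * ‖w t‖ - w t * n') / (‖w t‖ : ℂ) ^ 2) t :=
    hw.hasDerivAt.div hnorm hnorm0
  have hconj : conj (w t) = (‖w t‖ : ℂ) ^ 2 / w t := by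
    rw [eq_div_iff hw0, Complex.conj_mul']
  have hsplit :
      conj (w t / (‖w t‖ : ℂ)) * ((deriv w t * ‖w t‖ - w t * n') / (‖w t‖ : ℂ) ^ 2) =
        deriv w t / w t - ((n' / ‖w t‖ : ℝ) : ℂ) := by
    rw [map_div₀, Complex.conj_ofReal, hconj]
    push_cast
    field_simp
  rw [hunit.deriv, hsplit, Complex.sub_im, Complex.ofReal_im, sub_zero]

theorem integral_im_conj_div_norm_mul_deriv {w ψ : ℝ → ℂ} (hw : ContDiff ℝ 1 w)
    (hw0 : ∀ t, w t ≠ 0) (hψ : ∀ t, HasDerivAt ψ (deriv w t / w t) t) (a b : ℝ) :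
    ∫ t in a..b, (conj (w t / (‖w t‖ : ℂ)) * deriv (fun s => w s / (‖w s‖ : ℂ)) t).im =
      (ψ b).im - (ψ a).im := by
  have hlogDeriv : Continuous fun t => deriv w t / w t :=
    (hw.continuous_deriv le_rfl).div hw.continuous hw0
  rw [intervalIntegral.integral_congr fun t _ =>
    im_conj_div_norm_mul_deriv (hw.differentiable one_ne_zero t) (hw0 t)]
  exact intervalIntegral.integral_eq_sub_of_hasDerivAt
    (fun t _ => Complex.imCLM.hasFDerivAt.comp_hasDerivAt t (hψ t))
    ((Complex.continuous_im.comp hlogDeriv).intervalIntegrable a b)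

theorem degree_zero_of_nonvanishing_general (A : Set ℂ)
    (hsc : SimplyConnectedSpace (closure A))
    (α : ℝ) (hα : 0 < α)
    (u : ℂ → ℂ) (U : Set ℂ) (hU : IsOpen U) (hUA : closure A ⊆ U)
    (hu : ContDiffOn ℝ 1 u U) (hlow : ∀ x ∈ closure A, α ≤ ‖u x‖)
    (γ : ℝ → ℂ) (hγ : ContDiff ℝ 1 γ) (hper : Function.Periodic γ 1)
    (hrange : Set.range γ ⊆ closure A) :
    (1 / (2 * π)) * (∫ t in (0:ℝ)..1,
        ((starRingEnd ℂ) (u (γ t) / (‖u (γ t)‖ : ℂ)) *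
          deriv (fun s : ℝ => u (γ s) / (‖u (γ s)‖ : ℂ)) t).im) = 0 := by
  have hγA : ∀ t, γ t ∈ closure A := fun t => hrange ⟨t, rfl⟩
  have hu0 : ∀ x ∈ closure A, u x ≠ 0 := fun x hx =>
    norm_pos_iff.1 (hα.trans_le (hlow x hx))
  have hw : ContDiff ℝ 1 fun t => u (γ t) := contDiff_iff_contDiffAt.2 fun t =>
    (hu.contDiffAt (hU.mem_nhds (hUA (hγA t)))).comp t hγ.contDiffAt
  obtain ⟨ψ, hψ, hexp⟩ := exists_hasDerivAt_exp_eq_of_contDiff hw fun t => hu0 _ (hγA t)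
  have hψ1 : ψ 1 = ψ 0 :=
    exp_lift_apply_one_eq_apply_zero_of_simplyConnectedSpace (hu.continuousOn.mono hUA) hu0
      hγ.continuous hγA (by simpa using hper 0)
      (continuous_iff_continuousAt.2 fun t => (hψ t).continuousAt) hexp
  rw [integral_im_conj_div_norm_mul_deriv hw (fun t => hu0 _ (hγA t)) hψ, hψ1, sub_self,
    mul_zero]

/-- if `u ∈ H¹(A; ℝ² \ B_α)` with `α > 0`, where `A ⊆ ℝ² ≃ ℂ` is
open, bounded and simply connected (with Lipschitz boundary, so that its
closure is simply connected as well), then `deg(u, ∂A) = 0`.  The degree is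
computed as the winding number `(1/2π) ∮_{∂A} j(u/|u|)·τ dH¹`, expressed along
any `C¹` loop `γ` (of period `1`) running in `closure A ⊇ ∂A`. -/
theorem degree_zero_of_nonvanishing (A : Set ℂ) (hA : IsOpen A)
    (hb : Bornology.IsBounded A) (hsc : SimplyConnectedSpace (closure A))
    (α : ℝ) (hα : 0 < α)
    (u : ℂ → ℂ) (U : Set ℂ) (hU : IsOpen U) (hUA : closure A ⊆ U)
    (hu : ContDiffOn ℝ 1 u U) (hlow : ∀ x ∈ closure A, α ≤ ‖u x‖)
    (γ : ℝ → ℂ) (hγ : ContDiff ℝ 1 γ) (hper : Function.Periodic γ 1)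
    (hrange : Set.range γ ⊆ closure A) (hbdry : frontier A ⊆ Set.range γ) :
    (1 / (2 * π)) * (∫ t in (0:ℝ)..1,
        ((starRingEnd ℂ) (u (γ t) / (‖u (γ t)‖ : ℂ)) *
          deriv (fun s : ℝ => u (γ s) / (‖u (γ s)‖ : ℂ)) t).im) = 0 :=
  degree_zero_of_nonvanishing_general A hsc α hα u U hU hUA hu hlow γ hγ hper hrange
end
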